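/- arXiv:2402.18360 — 2 statements merged into one kernel-verified Lean document; each statement's English description precedes it below -/
import Mathlib

section
/- First Isomorphism Theorem (similarity-based, isomorphism case): if H : A → B is an isomorphism of L-algebras, then a : b ≈_{(A,B)} Ha : Hb for all a, b ∈ A. -/
/-- Terms over a language `L` of function symbols with arities `ar`,
with variables indexed by `ℕ`. -/
inductive Term (L : Type) (ar : L → ℕ) : Type
  | var : ℕ → Term L ar
  | app : (f : L) → (Fin (ar f) → Term L ar) → Term L ar

/-- An `L`-algebra. -/
structure Alg (L : Type) (ar : L → ℕ) where
  carrier : Type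
  op : (f : L) → (Fin (ar f) → carrier) → carrier

/-- Evaluation of a term in an algebra under an assignment of the variables. -/
def Term.eval {L : Type} {ar : L → ℕ} (A : Alg L ar) (ρ : ℕ → A.carrier) :
    Term L ar → A.carrier
  | .var n => ρ n
  | .app f ts => A.op f fun i => (ts i).eval A ρ

/-- Homomorphisms of `L`-algebras. -/
def IsHom {L : Type} {ar : L → ℕ} (A B : Alg L ar) (H : A.carrier → B.carrier) : Prop :=
  ∀ (f : L) (as : Fin (ar f) → A.carrier), H (A.op f as) = B.op f (H ∘ as)

/-- Justifications of an arrow `a → b`: pairs of terms `(s, t)` realized under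
a common assignment. -/
def Jus {L : Type} {ar : L → ℕ} (A : Alg L ar) (p : A.carrier × A.carrier) :
    Set (Term L ar × Term L ar) :=
  {st | ∃ ρ : ℕ → A.carrier, st.1.eval A ρ = p.1 ∧ st.2.eval A ρ = p.2}

/-- Trivial justifications in `(A, B)`: those justifying every arrow in `A` and in `B`. -/
def TrivJus {L : Type} {ar : L → ℕ} (A B : Alg L ar) : Set (Term L ar × Term L ar) :=
  {st | (∀ p : A.carrier × A.carrier, st ∈ Jus A p) ∧
        (∀ q : B.carrier × B.carrier, st ∈ Jus B q)}

/-- The arrow relation `(a→b) ≲_{(A,B)} (c→d)`: either all justifications on either side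
are trivial, or the common justifications include a non-trivial one and form a maximal
set among common justification sets with arrows of `B`. -/
def ArrLe {L : Type} {ar : L → ℕ} (A B : Alg L ar)
    (p : A.carrier × A.carrier) (q : B.carrier × B.carrier) : Prop :=
  (Jus A p ∪ Jus B q ⊆ TrivJus A B) ∨
  (TrivJus A B ⊂ Jus A p ∩ Jus B q ∧
    ∀ q' : B.carrier × B.carrier,
      TrivJus A B ⊂ Jus A p ∩ Jus B q → Jus A p ∩ Jus B q ⊆ Jus A p ∩ Jus B q' →
        TrivJus A B ⊂ Jus A p ∩ Jus B q' ∧ Jus A p ∩ Jus B q' ⊆ Jus A p ∩ Jus B q)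

/-- Similarity-based analogical proportion `a : b ≈_{(A,B)} c : d`. -/
def AP {L : Type} {ar : L → ℕ} (A B : Alg L ar) (a b : A.carrier) (c d : B.carrier) : Prop :=
  ArrLe A B (a, b) (c, d) ∧ ArrLe A B (b, a) (d, c) ∧
  ArrLe B A (c, d) (a, b) ∧ ArrLe B A (d, c) (b, a)

/-- Generalizations of an element. -/
def Gen {L : Type} {ar : L → ℕ} (A : Alg L ar) (a : A.carrier) : Set (Term L ar) :=
  {s | ∃ ρ : ℕ → A.carrier, s.eval A ρ = a}

/-- Trivial generalizations in `(A, B)`. -/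
def TrivGen {L : Type} {ar : L → ℕ} (A B : Alg L ar) : Set (Term L ar) :=
  {s | (∀ a : A.carrier, s ∈ Gen A a) ∧ (∀ b : B.carrier, s ∈ Gen B b)}

/-- `a ≲_{(A,B)} b` for elements. -/
def SimLe {L : Type} {ar : L → ℕ} (A B : Alg L ar) (a : A.carrier) (b : B.carrier) : Prop :=
  (Gen A a ∪ Gen B b ⊆ TrivGen A B) ∨
  (TrivGen A B ⊂ Gen A a ∩ Gen B b ∧
    ∀ b' : B.carrier,
      TrivGen A B ⊂ Gen A a ∩ Gen B b → Gen A a ∩ Gen B b ⊆ Gen A a ∩ Gen B b' →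
        TrivGen A B ⊂ Gen A a ∩ Gen B b' ∧ Gen A a ∩ Gen B b' ⊆ Gen A a ∩ Gen B b)

/-- The similarity relation `a ≈_{(A,B)} b`. -/
def Sim {L : Type} {ar : L → ℕ} (A B : Alg L ar) (a : A.carrier) (b : B.carrier) : Prop :=
  SimLe A B a b ∧ SimLe B A b a

/-!
Evaluation of terms commutes with homomorphisms, so an isomorphism `H` preserves justification
sets exactly: `Jus (H a → H b) = Jus (a → b)`. Two arrows with the same justifications have all of
them in common, and no common justification set can exceed that, so every arrow relation making up
the proportion holds.
-/

section

variable {L : Type} {ar : L → ℕ} {A B : Alg L ar}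

theorem Term.eval_comp_of_isHom {H : A.carrier → B.carrier} (hH : IsHom A B H) :
    ∀ (t : Term L ar) (ρ : ℕ → A.carrier), t.eval B (H ∘ ρ) = H (t.eval A ρ)
  | .var _, _ => rfl
  | .app f ts, ρ => by
    rw [Term.eval, Term.eval, hH]
    congr 1
    funext i
    exact eval_comp_of_isHom hH (ts i) ρ

theorem jus_subset_jus_map {H : A.carrier → B.carrier} (hH : IsHom A B H)
    (p : A.carrier × A.carrier) : Jus A p ⊆ Jus B (H p.1, H p.2) := by
  rintro st ⟨ρ, h₁, h₂⟩
  exact ⟨H ∘ ρ, by rw [Term.eval_comp_of_isHom hH, h₁], by rw [Term.eval_comp_of_isHom hH, h₂]⟩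

theorem jus_map_eq {H : A.carrier → B.carrier} {G : B.carrier → A.carrier}
    (hH : IsHom A B H) (hG : IsHom B A G) (hGH : ∀ x, G (H x) = x) (a b : A.carrier) :
    Jus B (H a, H b) = Jus A (a, b) := by
  refine Set.Subset.antisymm ?_ (jus_subset_jus_map hH (a, b))
  simpa only [hGH] using jus_subset_jus_map hG (H a, H b)

theorem trivJus_subset_jus (p : A.carrier × A.carrier) : TrivJus A B ⊆ Jus A p :=
  fun _ hst => hst.1 p

theorem arrLe_of_jus_eq {p : A.carrier × A.carrier} {q : B.carrier × B.carrier}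
    (h : Jus B q = Jus A p) : ArrLe A B p q := by
  rw [ArrLe, h, Set.union_self, Set.inter_self]
  by_cases htriv : Jus A p ⊆ TrivJus A B
  · exact Or.inl htriv
  · have hlt : TrivJus A B ⊂ Jus A p := ⟨trivJus_subset_jus p, htriv⟩
    refine Or.inr ⟨hlt, fun q' _ hle => ?_⟩
    rw [Set.inter_eq_left.mpr (hle.trans Set.inter_subset_right)]
    exact ⟨hlt, subset_rfl⟩

end

theorem first_isomorphism_theorem_iso_general {L : Type} {ar : L → ℕ} (A B : Alg L ar)
    (H : A.carrier → B.carrier) (G : B.carrier → A.carrier)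
    (hH : IsHom A B H) (hG : IsHom B A G)
    (hGH : ∀ x, G (H x) = x) :
    ∀ a b : A.carrier, AP A B a b (H a) (H b) := by
  intro a b
  have hab := jus_map_eq hH hG hGH a b
  have hba := jus_map_eq hH hG hGH b a
  exact ⟨arrLe_of_jus_eq hab, arrLe_of_jus_eq hba,
    arrLe_of_jus_eq hab.symm, arrLe_of_jus_eq hba.symm⟩

/-- First Isomorphism Theorem (similarity-based), isomorphism case:
`a : b ≈_{(A,B)} Ha : Hb` for all `a, b ∈ A`. -/
theorem first_isomorphism_theorem_iso {L : Type} {ar : L → ℕ} (A B : Alg L ar)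
    (H : A.carrier → B.carrier) (G : B.carrier → A.carrier)
    (hH : IsHom A B H) (hG : IsHom B A G)
    (hGH : ∀ x, G (H x) = x) (hHG : ∀ y, H (G y) = y) :
    ∀ a b : A.carrier, AP A B a b (H a) (H b) :=
  first_isomorphism_theorem_iso_general A B H G hH hG hGH
end

section
/- In the algebra ({a,b,c}, f, g) with f(a)=b, g(a)=c, and f, g fixing both b and c (a, b, c pairwise distinct), the proportion a : b ≈ a : c fails; in particular the common justifications of a→b and a→c form a proper subset of the common justifications of a→b and b→b. -/
/-- The algebra `({a,b,c}, f, g)` with `f(a)=b, g(a)=c`, and `f, g` fixing `b` and `c`,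
where `a=0, b=1, c=2` and `true` denotes `f`, `false` denotes `g`. -/
abbrev A19 : Alg Bool (fun _ => 1) :=
  ⟨Fin 3, fun s v => if s then ![1, 1, 2] (v 0) else ![2, 1, 2] (v 0)⟩

/-!
The element `b` is fixed by every operation, so the constant assignment `b` evaluates every
term to `b` and every pair of terms justifies `b → b`. Hence the common justifications of
`a → b` and `b → b` are all justifications of `a → b`, among them `(x, f x)`, which does not
justify `a → c` since `f a = b ≠ c`. So the common justification set of `a → b` and `a → c` is
not maximal, and `(a → b) ≲ (a → c)` fails, both disjuncts of `ArrLe` being excluded by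
`(x, f x)`.
-/

section Justifications

variable {L : Type} {ar : L → ℕ}

theorem Term.eval_const_of_op_const (A : Alg L ar) {e : A.carrier}
    (he : ∀ f, A.op f (fun _ => e) = e) (t : Term L ar) : t.eval A (fun _ => e) = e := by
  induction t with
  | var n => rfl
  | app f ts ih => simp only [Term.eval, ih, he]

theorem jus_self_eq_univ_of_op_const (A : Alg L ar) {e : A.carrier}
    (he : ∀ f, A.op f (fun _ => e) = e) : Jus A (e, e) = Set.univ :=
  Set.eq_univ_of_forall fun _ =>
    ⟨fun _ => e, Term.eval_const_of_op_const A he _, Term.eval_const_of_op_const A he _⟩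

theorem var_app_mem_jus_iff (A : Alg L ar) (n : ℕ) (f : L) (a b : A.carrier) :
    (Term.var n, Term.app f fun _ => Term.var n) ∈ Jus A (a, b) ↔ A.op f (fun _ => a) = b := by
  constructor
  · rintro ⟨ρ, hn, hf⟩
    simpa only [Term.eval, show ρ n = a from hn] using hf
  · intro h
    exact ⟨fun _ => a, rfl, h⟩

theorem not_arrLe_of_ssubset {A B : Alg L ar} {p : A.carrier × A.carrier}
    {q q' : B.carrier × B.carrier} (h : Jus A p ∩ Jus B q ⊂ Jus A p ∩ Jus B q') :
    ¬ ArrLe A B p q := by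
  obtain ⟨st, ⟨hp, hq'⟩, hnot⟩ := Set.exists_of_ssubset h
  rintro (htriv | ⟨hnontriv, hmax⟩)
  · exact hnot ⟨hp, (htriv (Or.inl hp)).2 q⟩
  · exact h.not_subset (hmax q' hnontriv h.subset).2

end Justifications

theorem A19_op_one (f : Bool) : A19.op f (fun _ => 1) = 1 := by
  cases f <;> rfl

/-- `a : b ≈ a : c` fails; in particular the common justifications of
`a→b` and `a→c` form a proper subset of the common justifications of `a→b` and `b→b`. -/
theorem ap_fails_A19 :
    ¬ AP A19 A19 (0 : Fin 3) 1 0 2 ∧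
      Jus A19 ((0 : Fin 3), 1) ∩ Jus A19 ((0 : Fin 3), 2) ⊂
        Jus A19 ((0 : Fin 3), 1) ∩ Jus A19 ((1 : Fin 3), 1) := by
  have hjus_bb : Jus A19 ((1 : Fin 3), 1) = Set.univ :=
    jus_self_eq_univ_of_op_const A19 A19_op_one
  have hx_fx_ab : (Term.var 0, Term.app true fun _ => Term.var 0) ∈ Jus A19 ((0 : Fin 3), 1) :=
    (var_app_mem_jus_iff A19 0 true 0 1).2 rfl
  have hx_fx_ac : (Term.var 0, Term.app true fun _ => Term.var 0) ∉ Jus A19 ((0 : Fin 3), 2) :=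
    fun h => absurd ((var_app_mem_jus_iff A19 0 true 0 2).1 h) (by decide)
  have hssub : Jus A19 ((0 : Fin 3), 1) ∩ Jus A19 ((0 : Fin 3), 2) ⊂
      Jus A19 ((0 : Fin 3), 1) ∩ Jus A19 ((1 : Fin 3), 1) := by
    rw [hjus_bb, Set.inter_univ]
    exact Set.ssubset_iff_subset_ne.2 ⟨Set.inter_subset_left,
      fun h => hx_fx_ac (h ▸ hx_fx_ab).2⟩
  exact ⟨fun hAP => not_arrLe_of_ssubset hssub hAP.1, hssub⟩
end
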